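/- arXiv:math/0211390 — 2 statements merged into one kernel-verified Lean document; each statement's English description precedes it below -/
import Mathlib

section
/- Under the • product, F = k⟨c,d⟩ is a free associative algebra on the countable generating set {1, d, d², d³, …}: these elements generate F under • and satisfy no non-trivial relations. -/
open scoped TensorProduct

/-- cd-monomials: `false` is the letter `c`, `true` is the letter `d`. -/
abbrev Mon := List Bool

/-- The polynomial algebra `F = ℚ⟨c,d⟩`. -/
abbrev F := MonoidAlgebra ℚ (FreeMonoid Bool)

noncomputable def mono (w : Mon) : F := MonoidAlgebra.single (FreeMonoid.ofList w) 1

noncomputable def cF : F := mono [false]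
noncomputable def dF : F := mono [true]

noncomputable def gLetter : Bool → F
  | false => dF
  | true  => cF * dF

noncomputable def gMon : Mon → F
  | [] => 0
  | a :: t => gLetter a * mono t + mono [a] * gMon t

/-- The derivation `G` with `G c = d`, `G d = cd`. -/
noncomputable def G : F →ₗ[ℚ] F :=
  (Finsupp.lsum ℚ fun w => LinearMap.toSpanSingleton ℚ F (gMon (FreeMonoid.toList w))) ∘ₗ
    (MonoidAlgebra.coeffLinearEquiv ℚ).toLinearMap

/-- `Psi n` is the cd-index of the Boolean lattice of rank `n+1`. -/
noncomputable def Psi : ℕ → F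
  | 0 => 1
  | n+1 => Psi n * cF + G (Psi n)

/-- degree of a cd-monomial (`c` has degree 1, `d` degree 2). -/
def deg (w : Mon) : ℕ := w.length + w.count true

/-- `beta v` : coefficient of `v` in the cd-index of the Boolean lattice of rank `deg v + 1`. -/
noncomputable def beta (w : Mon) : ℚ := (Psi (deg w)).coeff (FreeMonoid.ofList w)

/-- The cd-monomial `c^{m_1} d c^{m_2} d ⋯ d c^{m_k}` associated to the list
`(m_1, …, m_k)`. -/
def ofExps : List ℕ → Mon
  | [] => []
  | [m] => List.replicate m false
  | m :: t => List.replicate m false ++ true :: ofExps t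

/-- The list of exponents `(m_1, …, m_k)` of a cd-monomial
`c^{m_1} d c^{m_2} d ⋯ d c^{m_k}`. -/
def toExps : Mon → List ℕ
  | [] => [0]
  | false :: t =>
      match toExps t with
      | [] => [1]
      | m :: r => (m + 1) :: r
  | true :: t => 0 :: toExps t

/-- The product `•` on cd-monomials: writing `u = (M',m)` and `v = (n,N')` in
exponent-list notation, `u • v = (M',m−1,n,N') + (M',m,n−1,N') + 2(M',m+n+1,N')`. -/
noncomputable def bulletMon (u v : Mon) : F :=
  (if (toExps u).getLast! = 0 then 0
    else mono (ofExps ((toExps u).dropLast ++ ((toExps u).getLast! - 1) :: toExps v)))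
  + (if (toExps v).head! = 0 then 0
    else mono (ofExps (toExps u ++ ((toExps v).head! - 1) :: (toExps v).tail)))
  + (2 : ℚ) • mono (ofExps ((toExps u).dropLast ++
      ((toExps u).getLast! + (toExps v).head! + 1) :: (toExps v).tail))

/-- The bilinear extension of `•` to `F`. -/
noncomputable def bulletF : F →ₗ[ℚ] F →ₗ[ℚ] F :=
  (Finsupp.lsum ℚ fun u => LinearMap.toSpanSingleton ℚ (F →ₗ[ℚ] F)
    ((Finsupp.lsum ℚ fun v =>
      LinearMap.toSpanSingleton ℚ F (bulletMon (FreeMonoid.toList u) (FreeMonoid.toList v))) ∘ₗ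
      (MonoidAlgebra.coeffLinearEquiv ℚ).toLinearMap)) ∘ₗ
    (MonoidAlgebra.coeffLinearEquiv ℚ).toLinearMap

/-- The `•`-product `d^{a₁} • d^{a₂} • ⋯ • d^{a_j}` of the generators `dⁿ = (F's
generators 1, d, d², …)` indexed by a nonempty word `(a₁, …, a_j)`. -/
noncomputable def bulletProd : List ℕ → F
  | [] => 0
  | [a] => mono (List.replicate a true)
  | a :: t => bulletF (mono (List.replicate a true)) (bulletProd t)

---- AUX ----
namespace FFree

lemma toExps_ne_nil : ∀ w : Mon, toExps w ≠ []
  | [] => by simp [toExps]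
  | false :: t => by
      simp only [toExps]
      cases h : toExps t with
      | nil => simp
      | cons m r => simp
  | true :: t => by simp [toExps]

lemma toExps_true_cons (t : Mon) : toExps (true :: t) = 0 :: toExps t := rfl

lemma toExps_false_cons (t : Mon) {m : ℕ} {r : List ℕ} (h : toExps t = m :: r) :
    toExps (false :: t) = (m + 1) :: r := by
  simp only [toExps, h]

lemma ofExps_zero_cons {t : List ℕ} (h : t ≠ []) : ofExps (0 :: t) = true :: ofExps t := by
  obtain ⟨b, t', rfl⟩ := List.exists_cons_of_ne_nil h
  simp [ofExps]

lemma ofExps_cons (m : ℕ) {t : List ℕ} (h : t ≠ []) :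
    ofExps (m :: t) = List.replicate m false ++ true :: ofExps t := by
  obtain ⟨b, t', rfl⟩ := List.exists_cons_of_ne_nil h
  simp [ofExps]

lemma ofExps_succ (m : ℕ) (t : List ℕ) : ofExps ((m+1) :: t) = false :: ofExps (m :: t) := by
  cases t with
  | nil => simp [ofExps, List.replicate_succ]
  | cons b t' => simp [ofExps, List.replicate_succ]

lemma ofExps_rep_append (a : ℕ) {l : List ℕ} (h : l ≠ []) :
    ofExps (List.replicate a 0 ++ l) = List.replicate a true ++ ofExps l := by
  induction a with
  | zero => simp
  | succ n ih =>
      rw [List.replicate_succ, List.cons_append,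
        ofExps_zero_cons (by simp [h]), ih, List.replicate_succ, List.cons_append]

lemma ofExps_toExps : ∀ w : Mon, ofExps (toExps w) = w
  | [] => rfl
  | true :: t => by
      rw [toExps_true_cons, ofExps_zero_cons (toExps_ne_nil t), ofExps_toExps t]
  | false :: t => by
      obtain ⟨m, r, h⟩ := List.exists_cons_of_ne_nil (toExps_ne_nil t)
      rw [toExps_false_cons t h, ofExps_succ, ← h, ofExps_toExps t]

lemma toExps_rep_true : ∀ a : ℕ, toExps (List.replicate a true) = List.replicate (a+1) 0
  | 0 => rfl
  | a+1 => by
      rw [List.replicate_succ, toExps_true_cons, toExps_rep_true a, ← List.replicate_succ]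

lemma toExps_rep_false_append : ∀ (m : ℕ) (w : Mon) {h : ℕ} {r : List ℕ},
    toExps w = h :: r → toExps (List.replicate m false ++ w) = (m + h) :: r
  | 0, w, h, r, hw => by simpa using hw
  | m+1, w, h, r, hw => by
      rw [List.replicate_succ, List.cons_append,
        toExps_false_cons _ (toExps_rep_false_append m w hw)]
      ring_nf

lemma toExps_ofExps : ∀ l : List ℕ, l ≠ [] → toExps (ofExps l) = l
  | [m], _ => by
      have : ofExps [m] = List.replicate m false ++ [] := by simp [ofExps]
      rw [this, toExps_rep_false_append m [] (by rfl)]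
      simp
  | m :: b :: t', _ => by
      rw [ofExps_cons m (by simp),
        toExps_rep_false_append m _ (by
          rw [toExps_true_cons, toExps_ofExps (b :: t') (by simp)]),
        Nat.add_zero]

noncomputable def PhiM (l : List ℕ) : Mon := (ofExps l).map not
noncomputable def PsiM (w : Mon) : List ℕ := toExps (w.map not)

lemma map_not_not (w : Mon) : (w.map not).map not = w := by
  rw [List.map_map]
  simp [Function.comp_def]

lemma PsiM_ne_nil (w : Mon) : PsiM w ≠ [] := toExps_ne_nil _

lemma PsiM_PhiM {l : List ℕ} (h : l ≠ []) : PsiM (PhiM l) = l := by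
  rw [PsiM, PhiM, map_not_not, toExps_ofExps l h]

lemma PhiM_PsiM (w : Mon) : PhiM (PsiM w) = w := by
  rw [PhiM, PsiM, ofExps_toExps, map_not_not]

lemma PhiM_single (a : ℕ) : PhiM [a] = List.replicate a true := by
  simp [PhiM, ofExps]

lemma PhiM_cons (a : ℕ) {t : List ℕ} (h : t ≠ []) :
    PhiM (a :: t) = List.replicate a true ++ false :: PhiM t := by
  rw [PhiM, ofExps_cons a h]
  simp [PhiM]

lemma count_PhiM_add_one : ∀ l : List ℕ, l ≠ [] → (PhiM l).count false + 1 = l.length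
  | [a], _ => by simp [PhiM_single, List.count_replicate]
  | a :: b :: t', _ => by
      rw [PhiM_cons a (by simp)]
      have := count_PhiM_add_one (b :: t') (by simp)
      simp [List.count_append, List.count_cons, List.count_replicate] at this ⊢
      omega

lemma bulletF_mono (u v : Mon) : bulletF (mono u) (mono v) = bulletMon u v := by
  have hc : ∀ w : Mon, (MonoidAlgebra.coeffLinearEquiv ℚ) (mono w)
      = Finsupp.single (FreeMonoid.ofList w) (1:ℚ) := fun w => rfl
  simp only [bulletF, LinearMap.comp_apply, LinearEquiv.coe_coe, hc]
  erw [Finsupp.lsum_single, LinearMap.toSpanSingleton_apply_one, LinearMap.comp_apply,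
    LinearEquiv.coe_coe, hc, Finsupp.lsum_single,
    LinearMap.toSpanSingleton_apply_one]
  rw [FreeMonoid.toList_ofList, FreeMonoid.toList_ofList]

lemma bulletMon_rep (a : ℕ) (w : Mon) :
    bulletMon (List.replicate a true) w =
      (if w.head? = some false then mono (List.replicate (a+1) true ++ w.tail) else 0)
      + (2:ℚ) • mono (List.replicate a true ++ false :: w) := by
  have h1 : (List.replicate (a+1) (0:ℕ)).getLast! = 0 :=
    List.getLast!_of_getLast? (by simp [List.getLast?_replicate])
  have h2 : (List.replicate (a+1) (0:ℕ)).dropLast = List.replicate a 0 := by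
    simp [List.dropLast_replicate]
  rw [bulletMon, toExps_rep_true, h1, h2, if_pos rfl, zero_add, Nat.zero_add]
  cases w with
  | nil =>
      rw [show toExps [] = [0] from rfl]
      simp only [List.head!_cons, List.tail_cons, if_pos rfl, zero_add]
      rw [ofExps_rep_append a (by simp), show ofExps [0+1] = [false] from rfl]
      simp
  | cons b t =>
      cases b with
      | true =>
          rw [toExps_true_cons]
          simp only [List.head!_cons, List.tail_cons, if_pos rfl, zero_add]
          rw [ofExps_rep_append a (by simp), ofExps_succ 0, ← toExps_true_cons,
            ofExps_toExps (true :: t)]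
          simp
      | false =>
          obtain ⟨m, r, h⟩ := List.exists_cons_of_ne_nil (toExps_ne_nil t)
          rw [toExps_false_cons t h]
          simp only [List.head!_cons, List.tail_cons, List.head?_cons,
            if_neg (Nat.add_one_ne_zero m), if_pos rfl]
          simp only [Nat.add_one_ne_zero, ↓reduceIte]
          rw [Nat.add_sub_cancel,
            ofExps_rep_append (a+1) (by simp), ← h, ofExps_toExps t,
            ofExps_rep_append a (by simp),
            show m + 1 + 1 = (m + 1) + 1 from rfl, ofExps_succ (m+1),
            ← toExps_false_cons t h, ofExps_toExps (false :: t)]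

lemma bulletF_rep_mono (a : ℕ) (w : Mon) :
    bulletF (mono (List.replicate a true)) (mono w) =
      (if w.head? = some false then mono (List.replicate (a+1) true ++ w.tail) else 0)
      + (2:ℚ) • mono (List.replicate a true ++ false :: w) := by
  rw [bulletF_mono, bulletMon_rep]

noncomputable def Msub (n : ℕ) : Submodule ℚ F :=
  Submodule.span ℚ (mono '' {w : Mon | w.count false < n})

lemma Msub_le {m n : ℕ} (h : m ≤ n) : Msub m ≤ Msub n :=
  Submodule.span_mono (Set.image_mono fun _ hw => lt_of_lt_of_le hw h)

lemma mono_mem_Msub {w : Mon} {n : ℕ} (h : w.count false < n) : mono w ∈ Msub n :=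
  Submodule.subset_span ⟨w, h, rfl⟩

lemma apply_eq_zero_of_mem_Msub {n : ℕ} {f : F} (hf : f ∈ Msub n) {w : Mon}
    (hw : n ≤ w.count false) : f.coeff (FreeMonoid.ofList w) = 0 := by
  induction hf using Submodule.span_induction with
  | mem x hx =>
      obtain ⟨w', hw', rfl⟩ := hx
      have hww : w' ≠ w := by
        intro hc
        subst hc
        exact absurd hw' (by simp only [Set.mem_setOf_eq]; omega)
      have hne : FreeMonoid.ofList w' ≠ FreeMonoid.ofList w := by
        intro hcontra
        exact hww (by simpa using congrArg FreeMonoid.toList hcontra)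
      exact Finsupp.single_eq_of_ne' hne
  | zero => rfl
  | add x y _ _ hx hy => rw [MonoidAlgebra.coeff_add, Finsupp.add_apply, hx, hy, add_zero]
  | smul c x _ hx => rw [MonoidAlgebra.coeff_smul, Finsupp.smul_apply, hx, smul_zero]

end FFree

namespace FFree

lemma count_tail_le (w : Mon) : w.tail.count false ≤ w.count false := by
  cases w with
  | nil => simp
  | cons b t => cases b <;> simp [List.count_cons]

lemma bulletF_rep_mem (a n : ℕ) {f : F} (hf : f ∈ Msub n) :
    bulletF (mono (List.replicate a true)) f ∈ Msub (n+1) := by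
  induction hf using Submodule.span_induction with
  | mem x hx =>
      obtain ⟨w', hw', rfl⟩ := hx
      simp only [Set.mem_setOf_eq] at hw'
      rw [bulletF_rep_mono]
      refine add_mem ?_ (Submodule.smul_mem _ _ (mono_mem_Msub ?_))
      · split
        · refine mono_mem_Msub ?_
          have h1 : w'.tail.count false ≤ w'.count false := count_tail_le w'
          have h2 : (List.replicate (a+1) true ++ w'.tail).count false
              = w'.tail.count false := by
            simp [List.count_append, List.count_replicate]
          omega
        · exact zero_mem _
      · have : (List.replicate a true ++ false :: w').count false
            = w'.count false + 1 := by
          simp [List.count_append, List.count_cons, List.count_replicate]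
        omega
  | zero => rw [map_zero]; exact zero_mem _
  | add x y _ _ hx hy => rw [map_add]; exact add_mem hx hy
  | smul c x _ hx => rw [map_smul]; exact Submodule.smul_mem _ _ hx

lemma bulletProd_key : ∀ l : List ℕ, l ≠ [] →
    bulletProd l - (2:ℚ)^(l.length - 1) • mono (PhiM l) ∈ Msub (l.length - 1)
  | [a], _ => by
      simp only [bulletProd, PhiM_single, List.length_cons, List.length_nil,
        Nat.zero_add, Nat.sub_self, pow_zero, one_smul, sub_self]
      exact zero_mem _
  | a :: b :: t', _ => by
      have ht : (b :: t') ≠ [] := by simp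
      have IH := bulletProd_key (b :: t') ht
      simp only [List.length_cons, Nat.add_sub_cancel] at IH ⊢
      set n := t'.length with hn
      have hrec : bulletProd (a :: b :: t')
          = bulletF (mono (List.replicate a true)) (bulletProd (b :: t')) := rfl
      set r := bulletProd (b :: t') - (2:ℚ)^n • mono (PhiM (b :: t')) with hr
      have hsplit : bulletProd (b :: t') = (2:ℚ)^n • mono (PhiM (b :: t')) + r := by
        rw [hr]; abel
      rw [hrec, hsplit, map_add, map_smul, bulletF_rep_mono, ← PhiM_cons a ht]
      have hclean : ∀ (iftm X B : F),
          (2:ℚ)^n • (iftm + (2:ℚ) • X) + B - (2:ℚ)^(n+1) • X = (2:ℚ)^n • iftm + B := by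
        intro iftm X B
        rw [smul_add, smul_smul, ← pow_succ]
        abel
      rw [hclean]
      refine add_mem (Submodule.smul_mem _ _ ?_) (bulletF_rep_mem a n IH)
      split
      · refine mono_mem_Msub ?_
        have h1 : (PhiM (b :: t')).tail.count false ≤ (PhiM (b :: t')).count false :=
          count_tail_le _
        have h2 := count_PhiM_add_one (b :: t') ht
        have h3 : (List.replicate (a+1) true ++ (PhiM (b :: t')).tail).count false
            = (PhiM (b :: t')).tail.count false := by
          simp [List.count_append, List.count_replicate]
        simp only [List.length_cons] at h2
        omega
      · exact zero_mem _

end FFree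

namespace FFree

noncomputable abbrev SP : Submodule ℚ F :=
  Submodule.span ℚ (Set.range fun l : {l : List ℕ // l ≠ []} => bulletProd l.1)

lemma mono_mem_SP : ∀ n : ℕ, ∀ w : Mon, w.count false < n → mono w ∈ SP := by
  intro n
  induction n with
  | zero => intro w h; omega
  | succ n ih =>
      intro w hw
      rcases Nat.lt_succ_iff_lt_or_eq.1 hw with h | h
      · exact ih w h
      · set l := PsiM w with hl
        have hlne : l ≠ [] := PsiM_ne_nil w
        have hΦ : PhiM l = w := PhiM_PsiM w
        have hlen : l.length - 1 = n := by
          have := count_PhiM_add_one l hlne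
          rw [hΦ, h] at this
          omega
        have hk := bulletProd_key l hlne
        rw [hlen, hΦ] at hk
        have hM : Msub n ≤ SP := by
          rw [Msub]
          refine Submodule.span_le.2 ?_
          rintro _ ⟨w', hw', rfl⟩
          exact ih w' hw'
        have hb : bulletProd l ∈ SP := Submodule.subset_span ⟨⟨l, hlne⟩, rfl⟩
        have h2 : (2:ℚ)^n • mono w ∈ SP := by
          have := sub_mem hb (hM hk)
          simpa using this
        have := SP.smul_mem ((2:ℚ)^n)⁻¹ h2
        rwa [smul_smul, inv_mul_cancel₀ (pow_ne_zero _ two_ne_zero), one_smul] at this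

lemma span_eq_top : SP = ⊤ := by
  rw [eq_top_iff]
  intro f _
  induction f using MonoidAlgebra.induction with
  | zero => exact zero_mem _
  | single_add x c f _ _ ih =>
      refine add_mem ?_ (ih Submodule.mem_top)
      have hx : MonoidAlgebra.single x c = c • mono (FreeMonoid.toList x) := by
        rw [mono, FreeMonoid.ofList_toList, MonoidAlgebra.smul_single,
          smul_eq_mul, mul_one]
      rw [hx]
      exact SP.smul_mem c
        (mono_mem_SP ((FreeMonoid.toList x).count false + 1) _ (Nat.lt_succ_self _))

lemma indep :
    LinearIndependent ℚ (fun l : {l : List ℕ // l ≠ []} => bulletProd l.1) := by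
  rw [linearIndependent_iff']
  intro s g hsum
  by_contra hcon
  push_neg at hcon
  obtain ⟨i₀, hi₀s, hi₀⟩ := hcon
  classical
  set T := s.filter (fun i => g i ≠ 0) with hT
  have hTne : T.Nonempty := ⟨i₀, Finset.mem_filter.2 ⟨hi₀s, hi₀⟩⟩
  obtain ⟨l₀, hl₀T, hmax⟩ := T.exists_max_image (fun i => i.1.length) hTne
  have hl₀s : l₀ ∈ s := (Finset.mem_filter.1 hl₀T).1
  have hgl₀ : g l₀ ≠ 0 := (Finset.mem_filter.1 hl₀T).2
  set w₀ := PhiM l₀.1 with hw₀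
  have hcount₀ : w₀.count false + 1 = l₀.1.length := count_PhiM_add_one l₀.1 l₀.2
  -- coefficient of each bulletProd at w₀
  have hcoef : ∀ i : {l : List ℕ // l ≠ []}, i.1.length ≤ l₀.1.length →
      (bulletProd i.1).coeff (FreeMonoid.ofList w₀)
        = if i = l₀ then (2:ℚ)^(l₀.1.length - 1) else 0 := by
    intro i hlen
    have hk := bulletProd_key i.1 i.2
    have hr0 : (bulletProd i.1 - (2:ℚ)^(i.1.length - 1) • mono (PhiM i.1)).coeff
        (FreeMonoid.ofList w₀) = 0 := by
      exact apply_eq_zero_of_mem_Msub (n := l₀.1.length - 1)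
        (Msub_le (Nat.sub_le_sub_right hlen 1) hk) (by omega)
    rw [MonoidAlgebra.coeff_sub, MonoidAlgebra.coeff_smul, Finsupp.sub_apply, Finsupp.smul_apply, sub_eq_zero] at hr0
    rw [hr0]
    by_cases hi : i = l₀
    · subst hi
      rw [mono, MonoidAlgebra.coeff_single, Finsupp.single_apply, if_pos rfl]
      simp
    · have hne : PhiM i.1 ≠ w₀ := by
        intro hc
        apply hi
        have : i.1 = l₀.1 := by
          rw [← PsiM_PhiM i.2, hc, hw₀, PsiM_PhiM l₀.2]
        exact Subtype.ext this
      have : FreeMonoid.ofList (PhiM i.1) ≠ FreeMonoid.ofList w₀ := by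
        intro hc
        exact hne (by simpa using congrArg FreeMonoid.toList hc)
      rw [mono, MonoidAlgebra.coeff_single, Finsupp.single_eq_of_ne' this, if_neg hi]
      simp
  have happ := congrArg (fun f : F => f.coeff (FreeMonoid.ofList w₀)) hsum
  simp only [MonoidAlgebra.coeff_zero, Finsupp.coe_zero, Pi.zero_apply] at happ
  rw [MonoidAlgebra.coeff_sum, Finsupp.finset_sum_apply] at happ
  have hterm : ∀ i ∈ s, (g i • bulletProd i.1).coeff (FreeMonoid.ofList w₀)
      = if i = l₀ then g l₀ * (2:ℚ)^(l₀.1.length - 1) else 0 := by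
    intro i hi
    rw [MonoidAlgebra.coeff_smul, Finsupp.smul_apply, smul_eq_mul]
    by_cases hg : g i = 0
    · rw [hg, zero_mul]
      by_cases hil : i = l₀
      · subst hil; exact absurd hg hgl₀
      · rw [if_neg hil]
    · have hiT : i ∈ T := Finset.mem_filter.2 ⟨hi, hg⟩
      rw [hcoef i (hmax i hiT)]
      by_cases hil : i = l₀
      · subst hil; rw [if_pos rfl, if_pos rfl]
      · rw [if_neg hil, if_neg hil, mul_zero]
  rw [Finset.sum_congr rfl hterm, Finset.sum_ite_eq' s l₀, if_pos hl₀s] at happ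
  exact hgl₀ (by
    have := happ.symm
    have h2 : (2:ℚ)^(l₀.1.length - 1) ≠ 0 := pow_ne_zero _ two_ne_zero
    field_simp at this
    exact (mul_eq_zero.1 this.symm).resolve_right h2)

end FFree


/-- Under the `•` product, `F = ℚ⟨c,d⟩` is a free associative
algebra on the generators `{1, d, d², d³, …}`: the `•`-products of generators
(indexed by nonempty words) are linearly independent and span `F`. -/
theorem F_free_on_d_powers :
    LinearIndependent ℚ (fun l : {l : List ℕ // l ≠ []} => bulletProd l.1)
    ∧ Submodule.span ℚ (Set.range fun l : {l : List ℕ // l ≠ []} => bulletProd l.1) = ⊤ :=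
  ⟨FFree.indep, FFree.span_eq_top⟩
end

section
/- For every positive integer n, the identity Σ_{j=0}^{n−1} (−1)^j (c^j) • (c^{n−1−j}) = (1 + (−1)^{n+1}) c^n holds in F̂; consequently, applying the coefficient functional Ψ_P* of any Eulerian poset P of rank n+1 yields the Euler relation f_1 − f_2 + ⋯ + (−1)^{n−1} f_n = 1 + (−1)^{n+1} for the flag f-vector of P. -/
open scoped TensorProduct

lemma toExps_rep (a : ℕ) : toExps (List.replicate a false) = [a] := by
  induction a with
  | zero => rfl
  | succ a ih => simp [List.replicate_succ, toExps, ih]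

lemma getLast!_single (a : ℕ) : [a].getLast! = a := rfl

lemma bulletMon_rep (a b : ℕ) :
    bulletMon (List.replicate a false) (List.replicate b false) =
      (if a = 0 then 0 else
          mono (List.replicate (a-1) false ++ true :: List.replicate b false))
      + (if b = 0 then 0 else
          mono (List.replicate a false ++ true :: List.replicate (b-1) false))
      + (2:ℚ) • mono (List.replicate (a+b+1) false) := by
  simp [bulletMon, toExps_rep, getLast!_single, ofExps]

/-- For every positive integer `n`, the identity
`Σ_{j=0}^{n−1} (−1)ʲ (cʲ) • (c^{n−1−j}) = (1 + (−1)^{n+1}) cⁿ` holds in `F̂`;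
consequently, applying the coefficient functional `Ψ_P*` of any Eulerian poset
`P` of rank `n+1` (a linear functional `φ` with `φ(cⁿ) = 1` and
`φ(c^{j−1} • c^{n−j}) = f_{{j}}(P)`) yields the Euler relation
`f₁ − f₂ + ⋯ + (−1)^{n−1} f_n = 1 + (−1)^{n+1}`. -/
theorem euler_relation (n : ℕ) (hn : 0 < n) :
    (∑ j ∈ Finset.range n, ((-1 : ℚ) ^ j) •
        bulletMon (List.replicate j false) (List.replicate (n - 1 - j) false)
      = ((1 : ℚ) + (-1) ^ (n + 1)) • mono (List.replicate n false))
    ∧ ∀ φ : F →ₗ[ℚ] ℚ, φ (mono (List.replicate n false)) = 1 →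
        ∑ j ∈ Finset.range n, (-1 : ℚ) ^ j *
            φ (bulletMon (List.replicate j false) (List.replicate (n - 1 - j) false))
          = 1 + (-1) ^ (n + 1) := by
  obtain ⟨m, rfl⟩ : ∃ m, n = m + 1 := ⟨n - 1, (Nat.succ_pred_eq_of_pos hn).symm⟩
  have key : (∑ j ∈ Finset.range (m+1), ((-1 : ℚ) ^ j) •
        bulletMon (List.replicate j false) (List.replicate (m+1 - 1 - j) false)
      = ((1 : ℚ) + (-1) ^ (m+1 + 1)) • mono (List.replicate (m+1) false)) := by
    have split : ∀ j ∈ Finset.range (m+1),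
        ((-1 : ℚ) ^ j) • bulletMon (List.replicate j false)
            (List.replicate (m+1 - 1 - j) false)
        = ((-1 : ℚ) ^ j) • (if j = 0 then 0 else
              mono (List.replicate (j-1) false ++ true :: List.replicate (m-j) false))
          + ((-1 : ℚ) ^ j) • (if m - j = 0 then 0 else
              mono (List.replicate j false ++ true :: List.replicate (m-j-1) false))
          + ((-1 : ℚ) ^ j) • ((2:ℚ) • mono (List.replicate (m+1) false)) := by
      intro j hj
      have hjm : j ≤ m := Nat.lt_succ_iff.mp (Finset.mem_range.mp hj)
      have h1 : m + 1 - 1 - j = m - j := by omega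
      have h2 : j + (m - j) + 1 = m + 1 := by omega
      rw [h1, bulletMon_rep, h2, smul_add, smul_add]
    rw [Finset.sum_congr rfl split]
    rw [Finset.sum_add_distrib, Finset.sum_add_distrib]
    have S1 : (∑ j ∈ Finset.range (m+1), ((-1 : ℚ) ^ j) • (if j = 0 then 0 else
          mono (List.replicate (j-1) false ++ true :: List.replicate (m-j) false)))
        = ∑ i ∈ Finset.range m, ((-1 : ℚ) ^ (i+1)) •
            mono (List.replicate i false ++ true :: List.replicate (m-1-i) false) := by
      rw [Finset.sum_range_succ']
      simp only [reduceIte, smul_zero, add_zero]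
      refine Finset.sum_congr rfl fun i hi => ?_
      have h3 : m - (i + 1) = m - 1 - i := by omega
      rw [if_neg (Nat.succ_ne_zero i), Nat.succ_sub_one, h3]
    have S2 : (∑ j ∈ Finset.range (m+1), ((-1 : ℚ) ^ j) • (if m - j = 0 then 0 else
          mono (List.replicate j false ++ true :: List.replicate (m-j-1) false)))
        = ∑ i ∈ Finset.range m, ((-1 : ℚ) ^ i) •
            mono (List.replicate i false ++ true :: List.replicate (m-1-i) false) := by
      rw [Finset.sum_range_succ]
      simp only [Nat.sub_self, reduceIte, smul_zero, add_zero]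
      refine Finset.sum_congr rfl fun i hi => ?_
      have hi' : i < m := Finset.mem_range.mp hi
      have h0 : m - i ≠ 0 := by omega
      have h1 : m - i - 1 = m - 1 - i := by omega
      rw [if_neg h0, h1]
    rw [S1, S2, ← Finset.sum_add_distrib]
    have Z : (∑ i ∈ Finset.range m, (((-1 : ℚ) ^ (i+1)) •
            mono (List.replicate i false ++ true :: List.replicate (m-1-i) false)
          + ((-1 : ℚ) ^ i) •
            mono (List.replicate i false ++ true :: List.replicate (m-1-i) false)))
        = 0 := by
      refine Finset.sum_eq_zero fun i hi => ?_
      rw [← add_smul]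
      have : (-1 : ℚ) ^ (i+1) + (-1 : ℚ) ^ i = 0 := by
        rw [pow_succ]; ring
      rw [this, zero_smul]
    rw [Z, zero_add]
    have S3 : (∑ j ∈ Finset.range (m+1), ((-1 : ℚ) ^ j) •
          ((2:ℚ) • mono (List.replicate (m+1) false)))
        = ((1 : ℚ) + (-1) ^ (m+1+1)) • mono (List.replicate (m+1) false) := by
      rw [← Finset.sum_smul, neg_one_geom_sum]
      rcases Nat.even_or_odd (m+1) with he | ho
      · rw [if_pos he, zero_smul]
        have : ((-1 : ℚ)) ^ (m+1+1) = -1 := by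
          rw [pow_succ, he.neg_one_pow]; ring
        rw [this]; simp
      · rw [if_neg (Nat.not_even_iff_odd.mpr ho), one_smul]
        have : ((-1 : ℚ)) ^ (m+1+1) = 1 := by
          rw [pow_succ, ho.neg_one_pow]; ring
        rw [this]; norm_num
    exact S3
  refine ⟨key, fun φ hφ => ?_⟩
  have := congrArg φ key
  simp only [map_sum, map_smul, smul_eq_mul, hφ, mul_one] at this
  exact this
end
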